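/- For a finite measurable space X, a probability measure ρ, a bounded measurable function f, and λ < 0, the supremum over probability measures π ≪ ρ of E_π[f] + (1/λ)·KL(π‖ρ) equals −(1/λ)·log E_ρ[exp(−λ f)], and it is attained at π* = ρ·exp(−λ f)/E_ρ[exp(−λ f)]. -/

import Mathlib

open Real Finset

/-!
Write `Z = ∑ ρ exp g` and let `q = ρ exp g / Z` be the tilted distribution, with `g = -l f`.
For every probability vector `p ≪ ρ`, `∑ p g - KL(p‖ρ) = log Z - KL(p‖q)`, so by Gibbs' inequality
`KL(p‖q) ≥ 0` the left side is at most `log Z`, with equality at `p = q`. Multiplying by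
`-1/l > 0` turns this into the claim.
-/

lemma sub_le_mul_log_div {p q : ℝ} (hp : 0 ≤ p) (hq : 0 < q) : p - q ≤ p * log (p / q) := by
  rcases hp.eq_or_lt with rfl | hp
  · simpa using hq.le
  calc p - q = p * (1 - (p / q)⁻¹) := by field_simp
    _ ≤ p * log (p / q) := by gcongr; exact one_sub_inv_le_log_of_pos (div_pos hp hq)

section Finite

variable {ι : Type*} [Fintype ι]

theorem sum_mul_log_div_nonneg {p q : ι → ℝ} (hp : ∀ x, 0 ≤ p x) (hq : ∀ x, 0 ≤ q x)
    (hpq : ∀ x, q x = 0 → p x = 0) (hsum : ∑ x, p x = ∑ x, q x) :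
    0 ≤ ∑ x, p x * log (p x / q x) := by
  have hterm : ∀ x, p x - q x ≤ p x * log (p x / q x) := by
    intro x
    rcases (hq x).eq_or_lt with h | h
    · simp [hpq x h.symm, ← h]
    · exact sub_le_mul_log_div (hp x) h
  calc (0 : ℝ) = ∑ x, (p x - q x) := by rw [sum_sub_distrib, hsum, sub_self]
    _ ≤ _ := sum_le_sum fun x _ => hterm x

noncomputable def gibbs (ρ g : ι → ℝ) (x : ι) : ℝ :=
  ρ x * exp (g x) / ∑ z, ρ z * exp (g z)

variable {ρ : ι → ℝ} (g : ι → ℝ)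

lemma sum_mul_exp_pos (hρ0 : ∀ x, 0 ≤ ρ x) (hρ : 0 < ∑ x, ρ x) : 0 < ∑ x, ρ x * exp (g x) := by
  obtain ⟨x, -, hx⟩ := (sum_pos_iff_of_nonneg fun x _ => hρ0 x).mp hρ
  exact sum_pos' (fun z _ => mul_nonneg (hρ0 z) (exp_pos _).le) ⟨x, mem_univ x, by positivity⟩

lemma gibbs_nonneg (hρ0 : ∀ x, 0 ≤ ρ x) (hρ : 0 < ∑ x, ρ x) (x : ι) : 0 ≤ gibbs ρ g x :=
  div_nonneg (mul_nonneg (hρ0 x) (exp_pos _).le) (sum_mul_exp_pos g hρ0 hρ).le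

lemma sum_gibbs (hρ0 : ∀ x, 0 ≤ ρ x) (hρ : 0 < ∑ x, ρ x) : ∑ x, gibbs ρ g x = 1 := by
  unfold gibbs
  rw [← sum_div, div_self (sum_mul_exp_pos g hρ0 hρ).ne']

lemma gibbs_eq_zero_iff (hρ0 : ∀ x, 0 ≤ ρ x) (hρ : 0 < ∑ x, ρ x) {x : ι} :
    gibbs ρ g x = 0 ↔ ρ x = 0 := by
  simp [gibbs, (sum_mul_exp_pos g hρ0 hρ).ne', exp_ne_zero]

lemma log_gibbs_div (hρ0 : ∀ x, 0 ≤ ρ x) (hρ : 0 < ∑ x, ρ x) {x : ι} (hx : ρ x ≠ 0) :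
    log (gibbs ρ g x / ρ x) = g x - log (∑ z, ρ z * exp (g z)) := by
  have hZ := (sum_mul_exp_pos g hρ0 hρ).ne'
  have hdiv : gibbs ρ g x / ρ x = exp (g x) / ∑ z, ρ z * exp (g z) := by
    rw [gibbs]; field_simp
  rw [hdiv, log_div (exp_ne_zero _) hZ, log_exp]

lemma sum_mul_log_div_gibbs (hρ0 : ∀ x, 0 ≤ ρ x) (hρ : 0 < ∑ x, ρ x) {p : ι → ℝ}
    (hp1 : ∑ x, p x = 1) (hpρ : ∀ x, ρ x = 0 → p x = 0) :
    ∑ x, p x * log (p x / gibbs ρ g x) =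
      ∑ x, p x * log (p x / ρ x) - ∑ x, p x * g x + log (∑ z, ρ z * exp (g z)) := by
  have hterm : ∀ x, p x * log (p x / gibbs ρ g x) =
      p x * log (p x / ρ x) - p x * g x + log (∑ z, ρ z * exp (g z)) * p x := by
    intro x
    by_cases hp : p x = 0
    · simp [hp]
    have hρx : ρ x ≠ 0 := mt (hpρ x) hp
    have hq : gibbs ρ g x ≠ 0 := mt (gibbs_eq_zero_iff g hρ0 hρ).mp hρx
    have hlog := log_gibbs_div g hρ0 hρ hρx
    rw [log_div hq hρx] at hlog
    rw [log_div hp hq, log_div hp hρx]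
    linear_combination -p x * hlog
  rw [sum_congr rfl fun x _ => hterm x, sum_add_distrib, sum_sub_distrib, ← mul_sum, hp1,
    mul_one]

theorem sum_mul_sub_sum_mul_log_div_le (hρ0 : ∀ x, 0 ≤ ρ x) (hρ : 0 < ∑ x, ρ x) {p : ι → ℝ}
    (hp0 : ∀ x, 0 ≤ p x) (hp1 : ∑ x, p x = 1) (hpρ : ∀ x, ρ x = 0 → p x = 0) :
    ∑ x, p x * g x - ∑ x, p x * log (p x / ρ x) ≤ log (∑ z, ρ z * exp (g z)) := by
  have hgibbs := sum_mul_log_div_nonneg hp0 (gibbs_nonneg g hρ0 hρ)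
    (fun x hx => hpρ x ((gibbs_eq_zero_iff g hρ0 hρ).mp hx)) (by rw [hp1, sum_gibbs g hρ0 hρ])
  rw [sum_mul_log_div_gibbs g hρ0 hρ hp1 hpρ] at hgibbs
  linarith

theorem sum_gibbs_mul_sub_sum_gibbs_mul_log_div (hρ0 : ∀ x, 0 ≤ ρ x) (hρ : 0 < ∑ x, ρ x) :
    ∑ x, gibbs ρ g x * g x - ∑ x, gibbs ρ g x * log (gibbs ρ g x / ρ x) =
      log (∑ z, ρ z * exp (g z)) := by
  have hself : ∑ x, gibbs ρ g x * log (gibbs ρ g x / gibbs ρ g x) = 0 :=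
    sum_eq_zero fun x _ => by by_cases h : gibbs ρ g x = 0 <;> simp [h]
  rw [sum_mul_log_div_gibbs g hρ0 hρ (sum_gibbs g hρ0 hρ)
    fun x hx => (gibbs_eq_zero_iff g hρ0 hρ).mpr hx] at hself
  linarith

lemma sum_mul_add_one_div_mul_eq (p f : ι → ℝ) {l : ℝ} (hl : l ≠ 0) (K : ℝ) :
    ∑ x, p x * f x + 1 / l * K = -(1 / l) * (∑ x, p x * (-l * f x) - K) := by
  have hscale : ∑ x, p x * (-l * f x) = -l * ∑ x, p x * f x := by
    rw [mul_sum]; exact sum_congr rfl fun x _ => by ring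
  rw [hscale]
  field_simp
  ring

end Finite

theorem entropic_risk_dual_sup_attained_general
    {X : Type*} [Fintype X]
    (ρ : X → ℝ) (hρ0 : ∀ x, 0 ≤ ρ x) (hρ1 : ∑ x, ρ x = 1)
    (f : X → ℝ) (l : ℝ) (hl : l < 0) :
    IsGreatest
      {v : ℝ | ∃ q : X → ℝ,
        (∀ x, 0 ≤ q x) ∧ (∑ x, q x = 1) ∧ (∀ x, ρ x = 0 → q x = 0) ∧
        v = (∑ x, q x * f x) + (1 / l) * ∑ x, q x * Real.log (q x / ρ x)}
      (-(1 / l) * Real.log (∑ x, ρ x * Real.exp (-l * f x)))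
    ∧
    (∑ x, (ρ x * Real.exp (-l * f x) / ∑ z, ρ z * Real.exp (-l * f z)) * f x)
      + (1 / l) * ∑ x, (ρ x * Real.exp (-l * f x) / ∑ z, ρ z * Real.exp (-l * f z)) *
          Real.log ((ρ x * Real.exp (-l * f x) / ∑ z, ρ z * Real.exp (-l * f z)) / ρ x)
      = -(1 / l) * Real.log (∑ x, ρ x * Real.exp (-l * f x)) := by
  have hρ : 0 < ∑ x, ρ x := hρ1 ▸ one_pos
  have hval := fun p => sum_mul_add_one_div_mul_eq p f hl.ne
  set q := gibbs ρ (fun x => -l * f x)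
  have hattain : ∑ x, q x * f x + 1 / l * ∑ x, q x * log (q x / ρ x) =
      -(1 / l) * log (∑ x, ρ x * exp (-l * f x)) := by
    rw [hval, sum_gibbs_mul_sub_sum_gibbs_mul_log_div _ hρ0 hρ]
  refine ⟨⟨⟨q, gibbs_nonneg _ hρ0 hρ, sum_gibbs _ hρ0 hρ,
    fun x hx => (gibbs_eq_zero_iff _ hρ0 hρ).mpr hx, hattain.symm⟩, ?_⟩, hattain⟩
  rintro v ⟨p, hp0, hp1, hpρ, rfl⟩
  rw [hval]
  exact mul_le_mul_of_nonneg_left (sum_mul_sub_sum_mul_log_div_le _ hρ0 hρ hp0 hp1 hpρ)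
    (neg_nonneg.mpr (one_div_neg.mpr hl).le)

/-- Risk-averse dual representation (`λ < 0`): the supremum over probability measures
`q ≪ ρ` of `E_q[f] + (1/λ)·KL(q‖ρ)` equals `-(1/λ)·log E_ρ[exp(-λ f)]`, and it is
attained at the tilted measure `q* = ρ·exp(-λ f)/E_ρ[exp(-λ f)]`. -/
theorem entropic_risk_dual_sup_attained
    {X : Type*} [Fintype X] [Nonempty X]
    (ρ : X → ℝ) (hρ0 : ∀ x, 0 ≤ ρ x) (hρ1 : ∑ x, ρ x = 1)
    (f : X → ℝ) (l : ℝ) (hl : l < 0) :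
    IsGreatest
      {v : ℝ | ∃ q : X → ℝ,
        (∀ x, 0 ≤ q x) ∧ (∑ x, q x = 1) ∧ (∀ x, ρ x = 0 → q x = 0) ∧
        v = (∑ x, q x * f x) + (1 / l) * ∑ x, q x * Real.log (q x / ρ x)}
      (-(1 / l) * Real.log (∑ x, ρ x * Real.exp (-l * f x)))
    ∧
    (∑ x, (ρ x * Real.exp (-l * f x) / ∑ z, ρ z * Real.exp (-l * f z)) * f x)
      + (1 / l) * ∑ x, (ρ x * Real.exp (-l * f x) / ∑ z, ρ z * Real.exp (-l * f z)) *
          Real.log ((ρ x * Real.exp (-l * f x) / ∑ z, ρ z * Real.exp (-l * f z)) / ρ x)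
      = -(1 / l) * Real.log (∑ x, ρ x * Real.exp (-l * f x)) :=
  entropic_risk_dual_sup_attained_general ρ hρ0 hρ1 f l hl
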